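/- Let n ≥ 2 be a natural number, let c₁, c₂ be real constants, and let f : ℝ → ℝ be a differentiable function satisfying f'(t) = −f(t) for all t. Define u(η,t) = f(t)·(c₁·log(tanh(η/2)) + c₂)^(1/n) (real power). Then for every η > 0 and every t ∈ ℝ with c₁·log(tanh(η/2)) + c₂ > 0, the function u satisfies the nonlinear diffusion equation ∂u/∂t (η,t) = (1/sinh η)·∂/∂η[ sinh η · ∂/∂η ( u(η,t)ⁿ ) ] − u(η,t), where u(η,t)ⁿ denotes the n-th power of u taken before differentiating in η. -/

import Mathlib

/-!
Since `sinh η · d/dη log (tanh (η/2)) = 1`, the function `c₁ log (tanh (η/2)) + c₂` is harmonic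
for the radial hyperbolic Laplacian. Where it is positive, `u(η,t)ⁿ = f(t)ⁿ (c₁ log (tanh (η/2)) + c₂)`,
so the diffusion term vanishes and the equation reduces to `f' = -f`.
-/

open Real Filter Topology

noncomputable def radialHyperbolicLaplacian (v : ℝ → ℝ) (η : ℝ) : ℝ :=
  (1 / sinh η) * deriv (fun s => sinh s * deriv v s) η

theorem radialHyperbolicLaplacian_congr {v w : ℝ → ℝ} {η : ℝ} (h : v =ᶠ[𝓝 η] w) :
    radialHyperbolicLaplacian v η = radialHyperbolicLaplacian w η := by
  have hflux : (fun s => sinh s * deriv v s) =ᶠ[𝓝 η] fun s => sinh s * deriv w s := by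
    filter_upwards [h.deriv] with s hs
    rw [hs]
  rw [radialHyperbolicLaplacian, radialHyperbolicLaplacian, hflux.deriv_eq]

theorem radialHyperbolicLaplacian_eq_zero {v : ℝ → ℝ} {η c : ℝ} (hη : η ≠ 0)
    (hv : ∀ᶠ s in 𝓝 η, HasDerivAt v (c / sinh s) s) :
    radialHyperbolicLaplacian v η = 0 := by
  have hflux : (fun s => sinh s * deriv v s) =ᶠ[𝓝 η] fun _ => c := by
    filter_upwards [hv, eventually_ne_nhds hη] with s hs hs0
    rw [hs.deriv, mul_div_cancel₀ _ (sinh_ne_zero.2 hs0)]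
  rw [radialHyperbolicLaplacian, hflux.deriv_eq, deriv_const, mul_zero]

/-- The right side is the chain-rule derivative of `log (sinh (x/2)) - log (cosh (x/2))`. -/
theorem one_div_sinh_eq_sub (x : ℝ) :
    1 / sinh x = cosh (x / 2) * (1 / 2) / sinh (x / 2) - sinh (x / 2) * (1 / 2) / cosh (x / 2) := by
  have hdouble : sinh x = 2 * sinh (x / 2) * cosh (x / 2) := by
    rw [← sinh_two_mul, mul_div_cancel₀ x two_ne_zero]
  rcases eq_or_ne (sinh (x / 2)) 0 with h0 | h0
  · simp [hdouble, h0]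
  have hc0 := (cosh_pos (x / 2)).ne'
  rw [hdouble]
  field_simp
  linear_combination -cosh_sq_sub_sinh_sq (x / 2)

theorem hasDerivAt_log_tanh_half {x : ℝ} (hx : 0 < x) :
    HasDerivAt (fun s => log (tanh (s / 2))) (1 / sinh x) x := by
  have hhalf : HasDerivAt (fun s : ℝ => s / 2) (1 / 2) x := by
    simpa using (hasDerivAt_id x).div_const 2
  have hsinh := ((hasDerivAt_sinh _).comp x hhalf).log (sinh_pos_iff.2 (half_pos hx)).ne'
  have hcosh := ((hasDerivAt_cosh _).comp x hhalf).log (cosh_pos (x / 2)).ne'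
  have hsplit : (fun s => log (sinh (s / 2)) - log (cosh (s / 2))) =ᶠ[𝓝 x]
      fun s => log (tanh (s / 2)) := by
    filter_upwards [eventually_gt_nhds hx] with s hs
    rw [tanh_eq_sinh_div_cosh,
      log_div (sinh_pos_iff.2 (half_pos hs)).ne' (cosh_pos _).ne']
  rw [one_div_sinh_eq_sub]
  exact (hsinh.sub hcosh).congr_of_eventuallyEq hsplit.symm

/-- If `f' = -f`, then `u(η,t) = f(t)·(c₁ log(tanh(η/2)) + c₂)^(1/n)` solves
`∂ₜu = Δ_H(uⁿ) - u` wherever `η > 0` and `c₁ log(tanh(η/2)) + c₂ > 0`. -/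
theorem stmt_1 (n : ℕ) (hn : 2 ≤ n) (c₁ c₂ : ℝ) (f : ℝ → ℝ)
    (hf : Differentiable ℝ f) (hf' : ∀ t : ℝ, deriv f t = - f t)
    (u : ℝ → ℝ → ℝ)
    (hu : ∀ η t : ℝ, u η t =
      f t * (c₁ * Real.log (Real.tanh (η / 2)) + c₂) ^ ((1 : ℝ) / n)) :
    ∀ η t : ℝ, 0 < η → 0 < c₁ * Real.log (Real.tanh (η / 2)) + c₂ →
      deriv (fun s : ℝ => u η s) t =
        (1 / Real.sinh η) *
          deriv (fun s : ℝ => Real.sinh s * deriv (fun r : ℝ => (u r t) ^ n) s) η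
        - u η t := by
  intro η t hη hpos
  set g : ℝ → ℝ := fun r => c₁ * log (tanh (r / 2)) + c₂
  have hg : ∀ r, 0 < r → HasDerivAt g (c₁ / sinh r) r := fun r hr =>
    (((hasDerivAt_log_tanh_half hr).const_mul c₁).add_const c₂).congr_deriv (mul_one_div _ _)
  have htime : deriv (fun s => u η s) t = - u η t := by
    simp only [hu η]
    rw [deriv_mul_const (hf t), hf', neg_mul]
  have hpow : (fun r => u r t ^ n) =ᶠ[𝓝 η] fun r => f t ^ n * g r := by
    filter_upwards [(hg η hη).continuousAt.eventually (lt_mem_nhds hpos)] with r hr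
    rw [hu, mul_pow, one_div, rpow_inv_natCast_pow hr.le (by omega)]
  have hharmonic : radialHyperbolicLaplacian (fun r => f t ^ n * g r) η = 0 :=
    radialHyperbolicLaplacian_eq_zero hη.ne' (c := f t ^ n * c₁) <| by
      filter_upwards [lt_mem_nhds hη] with s hs
      simpa [mul_div_assoc] using (hg s hs).const_mul (f t ^ n)
  change _ = radialHyperbolicLaplacian (fun r => u r t ^ n) η - u η t
  rw [htime, radialHyperbolicLaplacian_congr hpow, hharmonic, zero_sub]
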